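/- Let k be a commutative ring, X a set, and Ω a semigroup. Then the k-module DDF(X,Ω) of X-decorated Ω-typed planar binary trees, equipped with the recursively defined operations {≺_ω, ≻_ω | ω ∈ Ω}, is a dendriform family algebra: for all T, U, W ∈ DDF(X,Ω) and α, β ∈ Ω one has (T ≺_α U) ≺_β W = T ≺_{αβ}(U ≺_β W + U ≻_α W), (T ≻_α U) ≺_β W = T ≻_α(U ≺_β W), and (T ≺_β U + T ≻_α U) ≻_{αβ} W = T ≻_α(U ≻_β W). -/
import Mathlib


/-- An `X`-decorated `Ω`-typed planar binary tree with at least one internal vertex.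
`node l x r` has root vertex decorated by `x : X`; a child `none` is a leaf `|`
(its edge carries the adjoined identity type `1 ∈ Ω¹`), while a child `some (t, α)` is a
nonempty subtree `t` whose internal edge to the root is typed by `α ∈ Ω`. -/
inductive PBT (X Ω : Type) : Type where
  | node : Option (PBT X Ω × Ω) → X → Option (PBT X Ω × Ω) → PBT X Ω

namespace PBT

variable {X Ω : Type}

/-- The single-vertex tree `stree x = | ∨_{x,(1,1)} |`. -/
def stree (x : X) : PBT X Ω := .node none x none

variable [Semigroup Ω] (k : Type) [CommRing k]

mutual
/-- `T ≺_ω U` on trees (Definition of the dendriform family operations):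
for `T = T^l ∨_{x,(α₁,α₂)} T^r`, `T ≺_ω U = T^l ∨_{x,(α₁,α₂ω)} (T^r ≺_ω U + T^r ≻_{α₂} U)`,
using the conventions `| ≺_ω U = 0`, `| ≻₁ U = U` when `T^r = |`. -/
noncomputable def tprec : PBT X Ω → Ω → PBT X Ω → (PBT X Ω →₀ k)
  | .node tl x none, ω, U => Finsupp.single (.node tl x (some (U, ω))) 1
  | .node tl x (some (t, α)), ω, U =>
      Finsupp.mapDomain (fun s => PBT.node tl x (some (s, α * ω)))
        (tprec t ω U + tsucc t α U)
  termination_by T _ U => sizeOf T + sizeOf U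
  decreasing_by all_goals (simp_wf; omega)

/-- `T ≻_ω U` on trees: for `U = U^l ∨_{y,(β₁,β₂)} U^r`,
`T ≻_ω U = (T ≺_{β₁} U^l + T ≻_ω U^l) ∨_{y,(ωβ₁,β₂)} U^r`,
using the conventions `T ≻_ω | = 0`, `T ≺₁ | = T` when `U^l = |`. -/
noncomputable def tsucc : PBT X Ω → Ω → PBT X Ω → (PBT X Ω →₀ k)
  | T, ω, .node none y ur => Finsupp.single (.node (some (T, ω)) y ur) 1
  | T, ω, .node (some (u, β)) y ur =>
      Finsupp.mapDomain (fun s => PBT.node (some (s, ω * β)) y ur)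
        (tprec T β u + tsucc T ω u)
  termination_by T _ U => sizeOf T + sizeOf U
  decreasing_by all_goals (simp_wf; omega)
end

/-- The bilinear extension of `≺_ω` to the free module `DDF(X,Ω) = PBT X Ω →₀ k`. -/
noncomputable def dprec (ω : Ω) (a b : PBT X Ω →₀ k) : PBT X Ω →₀ k :=
  a.sum fun T ca => b.sum fun U cb => (ca * cb) • tprec k T ω U

/-- The bilinear extension of `≻_ω` to the free module `DDF(X,Ω) = PBT X Ω →₀ k`. -/
noncomputable def dsucc (ω : Ω) (a b : PBT X Ω →₀ k) : PBT X Ω →₀ k :=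
  a.sum fun T ca => b.sum fun U cb => (ca * cb) • tsucc k T ω U

end PBT

namespace PBT
variable {X Ω : Type} [Semigroup Ω] (k : Type) [CommRing k]
lemma tprec_none (tl : Option (PBT X Ω × Ω)) (x : X) (ω : Ω) (U : PBT X Ω) :
    tprec k (.node tl x none) ω U = Finsupp.single (.node tl x (some (U, ω))) 1 := by
  rw [tprec]
lemma tprec_some (tl : Option (PBT X Ω × Ω)) (x : X) (t : PBT X Ω) (α ω : Ω) (U : PBT X Ω) :
    tprec k (.node tl x (some (t, α))) ω U
      = Finsupp.mapDomain (fun s => PBT.node tl x (some (s, α * ω)))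
        (tprec k t ω U + tsucc k t α U) := by
  rw [tprec]
lemma tsucc_none (T : PBT X Ω) (ω : Ω) (y : X) (ur : Option (PBT X Ω × Ω)) :
    tsucc k T ω (.node none y ur) = Finsupp.single (.node (some (T, ω)) y ur) 1 := by
  rw [tsucc]
lemma tsucc_some (T : PBT X Ω) (ω β : Ω) (u : PBT X Ω) (y : X) (ur : Option (PBT X Ω × Ω)) :
    tsucc k T ω (.node (some (u, β)) y ur)
      = Finsupp.mapDomain (fun s => PBT.node (some (s, ω * β)) y ur)
        (tprec k T β u + tsucc k T ω u) := by
  rw [tsucc]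
end PBT

namespace PBT
set_option linter.unusedSectionVars false
variable {X Ω : Type} [Semigroup Ω] (k : Type) [CommRing k]

/-- Linear extension helper: `csum a F = Σ_T a(T) • F T`. -/
noncomputable def csum (a : PBT X Ω →₀ k) (F : PBT X Ω → (PBT X Ω →₀ k)) : PBT X Ω →₀ k :=
  a.sum fun T c => c • F T

@[simp] lemma csum_zero_left (F : PBT X Ω → (PBT X Ω →₀ k)) : csum k 0 F = 0 :=
  Finsupp.sum_zero_index

@[simp] lemma csum_zero_right (a : PBT X Ω →₀ k) : csum k a (fun _ => 0) = 0 := by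
  simp [csum]

lemma csum_add_left (a b : PBT X Ω →₀ k) (F : PBT X Ω → (PBT X Ω →₀ k)) :
    csum k (a + b) F = csum k a F + csum k b F :=
  Finsupp.sum_add_index' (fun T => zero_smul k (F T)) (fun T c d => add_smul c d (F T))

@[simp] lemma csum_single_left (T : PBT X Ω) (c : k) (F : PBT X Ω → (PBT X Ω →₀ k)) :
    csum k (Finsupp.single T c) F = c • F T :=
  Finsupp.sum_single_index (zero_smul k (F T))

lemma csum_smul_left (r : k) (a : PBT X Ω →₀ k) (F : PBT X Ω → (PBT X Ω →₀ k)) :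
    csum k (r • a) F = r • csum k a F := by
  rw [csum, Finsupp.sum_smul_index (fun T => zero_smul k (F T)), csum, Finsupp.smul_sum]
  exact Finsupp.sum_congr fun T _ => mul_smul r (a T) (F T)

lemma csum_add_right (a : PBT X Ω →₀ k) (F G : PBT X Ω → (PBT X Ω →₀ k)) :
    csum k a (fun T => F T + G T) = csum k a F + csum k a G := by
  rw [csum, csum, csum, ← Finsupp.sum_add]
  exact Finsupp.sum_congr fun T _ => smul_add (a T) (F T) (G T)

lemma csum_mapDomain_left (f : PBT X Ω → PBT X Ω) (a : PBT X Ω →₀ k)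
    (F : PBT X Ω → (PBT X Ω →₀ k)) :
    csum k (Finsupp.mapDomain f a) F = csum k a (fun s => F (f s)) :=
  Finsupp.sum_mapDomain_index (fun T => zero_smul k (F T)) (fun T c d => add_smul c d (F T))

lemma csum_mapDomain_right (g : PBT X Ω → PBT X Ω) (a : PBT X Ω →₀ k)
    (F : PBT X Ω → (PBT X Ω →₀ k)) :
    csum k a (fun s => Finsupp.mapDomain g (F s)) = Finsupp.mapDomain g (csum k a F) := by
  rw [csum, csum, ← Finsupp.mapDomain.addMonoidHom_apply, map_finsuppSum]
  exact Finsupp.sum_congr fun T _ => by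
    rw [Finsupp.mapDomain.addMonoidHom_apply, Finsupp.mapDomain_smul]

lemma csum_single_right (f : PBT X Ω → PBT X Ω) (a : PBT X Ω →₀ k) :
    csum k a (fun s => Finsupp.single (f s) 1) = Finsupp.mapDomain f a := by
  rw [Finsupp.mapDomain, csum]
  exact Finsupp.sum_congr fun T _ => by rw [Finsupp.smul_single, smul_eq_mul, mul_one]

lemma csum_comm (a b : PBT X Ω →₀ k) (H : PBT X Ω → PBT X Ω → (PBT X Ω →₀ k)) :
    csum k a (fun s => csum k b (fun r => H s r))
      = csum k b (fun r => csum k a (fun s => H s r)) := by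
  simp only [csum, Finsupp.smul_sum]
  rw [Finsupp.sum_comm]
  exact Finsupp.sum_congr fun T _ => Finsupp.sum_congr fun V _ => smul_comm _ _ _

lemma csum_congr {a : PBT X Ω →₀ k} {F G : PBT X Ω → (PBT X Ω →₀ k)}
    (h : ∀ s, F s = G s) : csum k a F = csum k a G := by
  simp only [funext h]

end PBT

namespace PBT
variable {X Ω : Type} (k : Type) [CommRing k]
variable [Semigroup Ω]

mutual

theorem axiom1 (α β : Ω) (T U W : PBT X Ω) :
    csum k (tprec k T α U) (fun V => tprec k V β W)
      = csum k (tprec k U β W + tsucc k U α W) (fun V => tprec k T (α * β) V) := by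
  obtain ⟨tl, x, tro⟩ := T
  cases tro with
  | none =>
      simp only [tprec_none, csum_single_left, one_smul, tprec_some, csum_single_right]
  | some p =>
      obtain ⟨t, γ⟩ := p
      simp only [tprec_some, csum_mapDomain_left, csum_mapDomain_right, csum_add_right,
        csum_add_left, mul_assoc]
      congr 1
      rw [axiom1 α β t U W, axiom2 γ β t U W, ← axiom3 γ α t U W,
        csum_add_left, csum_add_left]
      abel
  termination_by sizeOf T + sizeOf U + sizeOf W
  decreasing_by all_goals (simp_wf; omega)

theorem axiom2 (α β : Ω) (T U W : PBT X Ω) :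
    csum k (tsucc k T α U) (fun V => tprec k V β W)
      = csum k (tprec k U β W) (fun V => tsucc k T α V) := by
  obtain ⟨uo, y, ur⟩ := U
  cases uo with
  | none =>
      cases ur with
      | none =>
          simp only [tsucc_none, tprec_none, csum_single_left, one_smul]
      | some q =>
          obtain ⟨w, δ⟩ := q
          simp only [tsucc_none, tprec_some, csum_single_left, one_smul,
            csum_mapDomain_left, csum_single_right]
  | some p =>
      obtain ⟨u, γ⟩ := p
      cases ur with
      | none =>
          simp only [tsucc_some, tprec_none, tprec_some, csum_mapDomain_left,
            csum_single_left, one_smul, csum_single_right]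
      | some q =>
          obtain ⟨w, δ⟩ := q
          rw [tsucc_some, tprec_some, csum_mapDomain_left, csum_mapDomain_left]
          simp only [tprec_some, tsucc_some]
          simp only [← csum_single_right]
          rw [csum_comm]
  termination_by sizeOf T + sizeOf U + sizeOf W
  decreasing_by all_goals (simp_wf; omega)

theorem axiom3 (α β : Ω) (T U W : PBT X Ω) :
    csum k (tprec k T β U + tsucc k T α U) (fun V => tsucc k V (α * β) W)
      = csum k (tsucc k U β W) (fun V => tsucc k T α V) := by
  obtain ⟨wo, z, wr⟩ := W
  cases wo with
  | none =>
      simp only [tsucc_none, csum_single_right, csum_single_left, one_smul, tsucc_some]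
  | some p =>
      obtain ⟨w, γ⟩ := p
      simp only [tsucc_some, csum_mapDomain_left, csum_mapDomain_right, csum_add_right,
        csum_add_left, mul_assoc]
      congr 1
      rw [axiom1 β γ T U w, axiom2 α γ T U w, ← axiom3 α β T U w,
        csum_add_left, csum_add_left]
      abel
  termination_by sizeOf T + sizeOf U + sizeOf W
  decreasing_by all_goals (simp_wf; omega)

end

end PBT

namespace PBT
set_option linter.unusedSectionVars false
variable {X Ω : Type} (k : Type) [CommRing k] [Semigroup Ω]

lemma csum_assoc (a : PBT X Ω →₀ k) (F G : PBT X Ω → (PBT X Ω →₀ k)) :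
    csum k (csum k a F) G = csum k a fun T => csum k (F T) G := by
  show (csum k a F).sum _ = _
  rw [csum, Finsupp.sum_sum_index (fun V => zero_smul k (G V)) (fun V c d => add_smul c d (G V))]
  exact Finsupp.sum_congr fun T _ => csum_smul_left k (a T) (F T) G

lemma dprec_eq (ω : Ω) (a b : PBT X Ω →₀ k) :
    dprec k ω a b = csum k a fun T => csum k b fun U => tprec k T ω U := by
  simp only [dprec, csum, Finsupp.smul_sum, smul_smul]

lemma dsucc_eq (ω : Ω) (a b : PBT X Ω →₀ k) :
    dsucc k ω a b = csum k a fun T => csum k b fun U => tsucc k T ω U := by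
  simp only [dsucc, csum, Finsupp.smul_sum, smul_smul]

end PBT


open PBT in
/-- The free `k`-module `DDF(X,Ω)` on `X`-decorated `Ω`-typed planar
binary trees, equipped with the recursively defined operations `{≺_ω, ≻_ω | ω ∈ Ω}`, is a
dendriform family algebra. -/
theorem DDF_dendriformFamily {X Ω : Type} [Semigroup Ω] (k : Type) [CommRing k] :
    ∀ (α β : Ω) (T U W : PBT X Ω →₀ k),
      dprec k β (dprec k α T U) W
        = dprec k (α * β) T (dprec k β U W + dsucc k α U W) ∧
      dprec k β (dsucc k α T U) W = dsucc k α T (dprec k β U W) ∧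
      dsucc k (α * β) (dprec k β T U + dsucc k α T U) W
        = dsucc k α T (dsucc k β U W) := by
  intro α β a b c
  refine ⟨?_, ?_, ?_⟩
  · simp only [dprec_eq, dsucc_eq, csum_add_left, csum_assoc]
    refine csum_congr k fun T => ?_
    rw [← csum_add_right]
    refine csum_congr k fun U => ?_
    rw [← csum_add_right, csum_comm]
    refine csum_congr k fun W => ?_
    rw [axiom1 k α β T U W, csum_add_left]
  · simp only [dprec_eq, dsucc_eq, csum_add_left, csum_assoc]
    refine csum_congr k fun T => ?_
    refine csum_congr k fun U => ?_
    rw [csum_comm]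
    exact csum_congr k fun W => axiom2 k α β T U W
  · simp only [dprec_eq, dsucc_eq, csum_add_left, csum_assoc]
    rw [← csum_add_right]
    refine csum_congr k fun T => ?_
    rw [← csum_add_right]
    refine csum_congr k fun U => ?_
    rw [← csum_add_left, csum_comm]
    exact csum_congr k fun W => axiom3 k α β T U W
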